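/- arXiv:2101.11219 — 4 statements merged into one kernel-verified Lean document; each statement's English description precedes it below -/
import Mathlib

section
/- Let ω be a positive integer and let h¹, h² : ℝ × [0, T) → ℝ be smooth functions, 2ωπ-periodic in the first variable, such that kⁱ := 1/(h^i_{θθ} + h^i) is positive and hⁱ_t = kⁱ_{θθ} + kⁱ for i = 1, 2. Then t ↦ ∫₀^{2ωπ} (h¹(θ,t) - h²(θ,t))² dθ is non-increasing. -/
open Real MeasureTheory intervalIntegral Set
private lemma one_le_inf : ((⊤:ℕ∞) : WithTop ℕ∞) ≠ 0 := by simp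

private lemma periodic_deriv_aux {f : ℝ → ℝ} {c : ℝ} (h : Function.Periodic f c) :
    Function.Periodic (deriv f) c := by
  intro x
  rw [← deriv_comp_add_const]
  rw [h.funext]

private lemma hasDerivAt_snd {φ : ℝ → ℝ → ℝ} (hφ : ContDiff ℝ ((⊤:ℕ∞) : WithTop ℕ∞) (Function.uncurry φ))
    (θ t : ℝ) :
    HasDerivAt (fun s => φ θ s) (fderiv ℝ (Function.uncurry φ) (θ, t) (0, 1)) t := by
  have hD := (hφ.differentiable one_le_inf (θ, t)).hasFDerivAt
  have hline : HasDerivAt (fun s : ℝ => ((θ, s) : ℝ × ℝ)) ((0 : ℝ), (1 : ℝ)) t :=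
    (hasDerivAt_const t θ).prodMk (hasDerivAt_id t)
  exact hD.comp_hasDerivAt t hline

private lemma cont_snd_fderiv {φ : ℝ → ℝ → ℝ} (hφ : ContDiff ℝ ((⊤:ℕ∞) : WithTop ℕ∞) (Function.uncurry φ)) :
    Continuous (fun p : ℝ × ℝ => fderiv ℝ (Function.uncurry φ) p (0, 1)) :=
  (hφ.continuous_fderiv one_le_inf).clm_apply continuous_const

private lemma hasDerivAt_param_integral {φ : ℝ → ℝ → ℝ}
    (hφ : ContDiff ℝ ((⊤:ℕ∞) : WithTop ℕ∞) (Function.uncurry φ)) (a b t₀ : ℝ) :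
    HasDerivAt (fun t => ∫ θ in a..b, φ θ t)
      (∫ θ in a..b, fderiv ℝ (Function.uncurry φ) (θ, t₀) (0, 1)) t₀ := by
  set G := fun p : ℝ × ℝ => fderiv ℝ (Function.uncurry φ) p (0, 1) with hG
  have hGc : Continuous G := cont_snd_fderiv hφ
  obtain ⟨C, hC⟩ : ∃ C, ∀ p ∈ (Set.uIcc a b ×ˢ Metric.closedBall t₀ 1), ‖G p‖ ≤ C :=
    (isCompact_uIcc.prod (isCompact_closedBall t₀ 1)).exists_bound_of_continuousOn
      hGc.continuousOn
  refine (intervalIntegral.hasDerivAt_integral_of_dominated_loc_of_deriv_le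
    (F := fun x θ => φ θ x) (F' := fun x θ => G (θ, x)) (bound := fun _ => C)
    (Metric.ball_mem_nhds t₀ one_pos) ?_ ?_ ?_ ?_ ?_ ?_).2
  · exact Filter.Eventually.of_forall fun x =>
      (hφ.continuous.comp (continuous_id.prodMk continuous_const)).aestronglyMeasurable
  · exact (hφ.continuous.comp (continuous_id.prodMk continuous_const)).intervalIntegrable a b
  · exact (hGc.comp (continuous_id.prodMk continuous_const)).aestronglyMeasurable
  · exact Filter.Eventually.of_forall fun θ hθ x hx =>
      hC (θ, x) ⟨Set.uIoc_subset_uIcc hθ, Metric.ball_subset_closedBall hx⟩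
  · exact intervalIntegrable_const
  · exact Filter.Eventually.of_forall fun θ _ x _ => hasDerivAt_snd hφ θ x

private lemma deriv2_sub {f g : ℝ → ℝ} (hf : ContDiff ℝ ((⊤:ℕ∞) : WithTop ℕ∞) f) (hg : ContDiff ℝ ((⊤:ℕ∞) : WithTop ℕ∞) g) :
    deriv (deriv (fun x => f x - g x)) = fun x => deriv (deriv f) x - deriv (deriv g) x := by
  have h1 : deriv (fun x => f x - g x) = fun x => deriv f x - deriv g x :=
    funext fun x => deriv_fun_sub (hf.differentiable one_le_inf x) (hg.differentiable one_le_inf x)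
  rw [h1]
  exact funext fun x => deriv_fun_sub
    ((contDiff_infty_iff_deriv.mp hf).2.differentiable one_le_inf x)
    ((contDiff_infty_iff_deriv.mp hg).2.differentiable one_le_inf x)

/-- Integration by parts twice for smooth periodic functions. -/
private lemma parts2 {L : ℝ} {u v : ℝ → ℝ} (hu : ContDiff ℝ ((⊤:ℕ∞) : WithTop ℕ∞) u) (hv : ContDiff ℝ ((⊤:ℕ∞) : WithTop ℕ∞) v)
    (hpu : Function.Periodic u L) (hpv : Function.Periodic v L) :
    ∫ θ in (0:ℝ)..L, u θ * deriv (deriv v) θ = ∫ θ in (0:ℝ)..L, deriv (deriv u) θ * v θ := by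
  have hdu : Differentiable ℝ u := hu.differentiable one_le_inf
  have hdv : Differentiable ℝ v := hv.differentiable one_le_inf
  have hu' : ContDiff ℝ ((⊤:ℕ∞) : WithTop ℕ∞) (deriv u) := (contDiff_infty_iff_deriv.mp hu).2
  have hv' : ContDiff ℝ ((⊤:ℕ∞) : WithTop ℕ∞) (deriv v) := (contDiff_infty_iff_deriv.mp hv).2
  have hu'' : Continuous (deriv (deriv u)) := (contDiff_infty_iff_deriv.mp hu').2.continuous
  have hv'' : Continuous (deriv (deriv v)) := (contDiff_infty_iff_deriv.mp hv').2.continuous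
  have I1 : ∫ θ in (0:ℝ)..L, u θ * deriv (deriv v) θ
      = u L * deriv v L - u 0 * deriv v 0 - ∫ θ in (0:ℝ)..L, deriv u θ * deriv v θ :=
    integral_mul_deriv_eq_deriv_mul (fun x _ => (hdu x).hasDerivAt)
      (fun x _ => ((hv'.differentiable one_le_inf) x).hasDerivAt)
      (hu'.continuous.intervalIntegrable _ _) (hv''.intervalIntegrable _ _)
  have I2 : ∫ θ in (0:ℝ)..L, v θ * deriv (deriv u) θ
      = v L * deriv u L - v 0 * deriv u 0 - ∫ θ in (0:ℝ)..L, deriv v θ * deriv u θ :=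
    integral_mul_deriv_eq_deriv_mul (fun x _ => (hdv x).hasDerivAt)
      (fun x _ => ((hu'.differentiable one_le_inf) x).hasDerivAt)
      (hv'.continuous.intervalIntegrable _ _) (hu''.intervalIntegrable _ _)
  have eu : u L = u 0 := by simpa using hpu 0
  have ev : v L = v 0 := by simpa using hpv 0
  have eu' : deriv u L = deriv u 0 := by simpa using (periodic_deriv_aux hpu) 0
  have ev' : deriv v L = deriv v 0 := by simpa using (periodic_deriv_aux hpv) 0
  have e3 : ∫ θ in (0:ℝ)..L, deriv u θ * deriv v θ = ∫ θ in (0:ℝ)..L, deriv v θ * deriv u θ :=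
    intervalIntegral.integral_congr fun θ _ => mul_comm _ _
  have e4 : ∫ θ in (0:ℝ)..L, deriv (deriv u) θ * v θ
      = ∫ θ in (0:ℝ)..L, v θ * deriv (deriv u) θ :=
    intervalIntegral.integral_congr fun θ _ => mul_comm _ _
  rw [I1, eu, ev', e4, I2, ev, eu', e3]
  ring

theorem entropy_flow_L2_contraction (ω : ℕ) (hω : 0 < ω) (T : ℝ) (hT : 0 < T)
    (h₁ h₂ k₁ k₂ : ℝ → ℝ → ℝ)
    (hs₁ : ContDiff ℝ (⊤ : ℕ∞) (Function.uncurry h₁))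
    (hs₂ : ContDiff ℝ (⊤ : ℕ∞) (Function.uncurry h₂))
    (hper₁ : ∀ t θ, h₁ (θ + 2*ω*π) t = h₁ θ t)
    (hper₂ : ∀ t θ, h₂ (θ + 2*ω*π) t = h₂ θ t)
    (hk₁ : ∀ θ t, k₁ θ t = 1 / (deriv (deriv (fun x => h₁ x t)) θ + h₁ θ t))
    (hk₂ : ∀ θ t, k₂ θ t = 1 / (deriv (deriv (fun x => h₂ x t)) θ + h₂ θ t))
    (hk₁pos : ∀ θ, ∀ t ∈ Set.Ico (0:ℝ) T, 0 < k₁ θ t)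
    (hk₂pos : ∀ θ, ∀ t ∈ Set.Ico (0:ℝ) T, 0 < k₂ θ t)
    (hev₁ : ∀ θ, ∀ t ∈ Set.Ico (0:ℝ) T,
      deriv (fun s => h₁ θ s) t = deriv (deriv (fun x => k₁ x t)) θ + k₁ θ t)
    (hev₂ : ∀ θ, ∀ t ∈ Set.Ico (0:ℝ) T,
      deriv (fun s => h₂ θ s) t = deriv (deriv (fun x => k₂ x t)) θ + k₂ θ t) :
    AntitoneOn (fun t => ∫ θ in (0:ℝ)..(2*ω*π), (h₁ θ t - h₂ θ t)^2)
      (Set.Ico 0 T) := by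
  have hLpos : (0:ℝ) < 2*ω*π := by
    have h1 : (1:ℝ) ≤ (ω:ℝ) := by exact_mod_cast hω
    nlinarith [pi_pos]
  have hφ : ContDiff ℝ ((⊤:ℕ∞) : WithTop ℕ∞) (Function.uncurry (fun θ t => (h₁ θ t - h₂ θ t)^2)) :=
    ((hs₁.of_le (by simp)).sub (hs₂.of_le (by simp))).pow 2
  have hF : ∀ t₀ : ℝ, HasDerivAt (fun t => ∫ θ in (0:ℝ)..(2*ω*π), (h₁ θ t - h₂ θ t)^2)
      (∫ θ in (0:ℝ)..(2*ω*π),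
        fderiv ℝ (Function.uncurry (fun θ t => (h₁ θ t - h₂ θ t)^2)) (θ, t₀) (0, 1)) t₀ :=
    fun t₀ => hasDerivAt_param_integral hφ 0 (2*ω*π) t₀
  have key : ∀ t ∈ Set.Ioo (0:ℝ) T,
      (∫ θ in (0:ℝ)..(2*ω*π),
        fderiv ℝ (Function.uncurry (fun θ t => (h₁ θ t - h₂ θ t)^2)) (θ, t) (0, 1)) ≤ 0 := by
    intro t ht
    have htI : t ∈ Set.Ico (0:ℝ) T := ⟨le_of_lt ht.1, ht.2⟩
    -- θ-smoothness at fixed t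
    have hg₁ : ContDiff ℝ ((⊤:ℕ∞) : WithTop ℕ∞) (fun x => h₁ x t) := (hs₁.of_le (by simp)).comp (contDiff_id.prodMk contDiff_const)
    have hg₂ : ContDiff ℝ ((⊤:ℕ∞) : WithTop ℕ∞) (fun x => h₂ x t) := (hs₂.of_le (by simp)).comp (contDiff_id.prodMk contDiff_const)
    have hw₁ : ContDiff ℝ ((⊤:ℕ∞) : WithTop ℕ∞) (fun x => deriv (deriv (fun x => h₁ x t)) x + h₁ x t) :=
      ((contDiff_infty_iff_deriv.mp (contDiff_infty_iff_deriv.mp hg₁).2).2).add hg₁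
    have hw₂ : ContDiff ℝ ((⊤:ℕ∞) : WithTop ℕ∞) (fun x => deriv (deriv (fun x => h₂ x t)) x + h₂ x t) :=
      ((contDiff_infty_iff_deriv.mp (contDiff_infty_iff_deriv.mp hg₂).2).2).add hg₂
    have hw₁pos : ∀ x, 0 < deriv (deriv (fun x => h₁ x t)) x + h₁ x t := by
      intro x
      have h := hk₁pos x t htI
      rw [hk₁ x t] at h
      exact one_div_pos.mp h
    have hw₂pos : ∀ x, 0 < deriv (deriv (fun x => h₂ x t)) x + h₂ x t := by
      intro x
      have h := hk₂pos x t htI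
      rw [hk₂ x t] at h
      exact one_div_pos.mp h
    have hK₁eq : (fun x => k₁ x t) = fun x => 1 / (deriv (deriv (fun x => h₁ x t)) x + h₁ x t) :=
      funext fun x => hk₁ x t
    have hK₂eq : (fun x => k₂ x t) = fun x => 1 / (deriv (deriv (fun x => h₂ x t)) x + h₂ x t) :=
      funext fun x => hk₂ x t
    have hK₁ : ContDiff ℝ ((⊤:ℕ∞) : WithTop ℕ∞) (fun x => k₁ x t) := by
      rw [hK₁eq]; exact contDiff_const.div hw₁ fun x => ne_of_gt (hw₁pos x)
    have hK₂ : ContDiff ℝ ((⊤:ℕ∞) : WithTop ℕ∞) (fun x => k₂ x t) := by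
      rw [hK₂eq]; exact contDiff_const.div hw₂ fun x => ne_of_gt (hw₂pos x)
    -- periodicity at fixed t
    have hpg₁ : Function.Periodic (fun x => h₁ x t) (2*ω*π) := fun x => hper₁ t x
    have hpg₂ : Function.Periodic (fun x => h₂ x t) (2*ω*π) := fun x => hper₂ t x
    have hpu : Function.Periodic (fun x => h₁ x t - h₂ x t) (2*ω*π) := fun x => by
      simp only [hpg₁ x, hpg₂ x]
    have hpw₁ : Function.Periodic (fun x => deriv (deriv (fun x => h₁ x t)) x + h₁ x t)
        (2*ω*π) := fun x => by
      simp only [periodic_deriv_aux (periodic_deriv_aux hpg₁) x, hpg₁ x]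
    have hpw₂ : Function.Periodic (fun x => deriv (deriv (fun x => h₂ x t)) x + h₂ x t)
        (2*ω*π) := fun x => by
      simp only [periodic_deriv_aux (periodic_deriv_aux hpg₂) x, hpg₂ x]
    have hpK₁ : Function.Periodic (fun x => k₁ x t) (2*ω*π) := by
      rw [hK₁eq]; intro x; simp only [hpw₁ x]
    have hpK₂ : Function.Periodic (fun x => k₂ x t) (2*ω*π) := by
      rw [hK₂eq]; intro x; simp only [hpw₂ x]
    have hpV : Function.Periodic (fun x => k₁ x t - k₂ x t) (2*ω*π) := fun x => by
      simp only [hpK₁ x, hpK₂ x]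
    have hV : ContDiff ℝ ((⊤:ℕ∞) : WithTop ℕ∞) (fun x => k₁ x t - k₂ x t) := hK₁.sub hK₂
    have hu : ContDiff ℝ ((⊤:ℕ∞) : WithTop ℕ∞) (fun x => h₁ x t - h₂ x t) := hg₁.sub hg₂
    -- pointwise identification of the derivative of the integrand
    have hGpt : ∀ θ : ℝ,
        fderiv ℝ (Function.uncurry (fun θ t => (h₁ θ t - h₂ θ t)^2)) (θ, t) (0, 1)
        = 2 * (h₁ θ t - h₂ θ t) *
          (deriv (deriv (fun x => k₁ x t - k₂ x t)) θ + (k₁ θ t - k₂ θ t)) := by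
      intro θ
      have hd1 : HasDerivAt (fun s => h₁ θ s) (deriv (fun s => h₁ θ s) t) t :=
        (hasDerivAt_snd (hs₁.of_le (by simp)) θ t).differentiableAt.hasDerivAt
      have hd2 : HasDerivAt (fun s => h₂ θ s) (deriv (fun s => h₂ θ s) t) t :=
        (hasDerivAt_snd (hs₂.of_le (by simp)) θ t).differentiableAt.hasDerivAt
      have hφθ : HasDerivAt (fun s => (h₁ θ s - h₂ θ s)^2)
          (2 * (h₁ θ t - h₂ θ t) *
            (deriv (fun s => h₁ θ s) t - deriv (fun s => h₂ θ s) t)) t := by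
        have : HasDerivAt (fun s => (h₁ θ s - h₂ θ s)^2) _ t := (hd1.sub hd2).pow 2
        simpa using this
      have hGθ : HasDerivAt (fun s => (h₁ θ s - h₂ θ s)^2)
          (fderiv ℝ (Function.uncurry (fun θ t => (h₁ θ t - h₂ θ t)^2)) (θ, t) (0, 1)) t :=
        hasDerivAt_snd hφ θ t
      have heq := hGθ.unique hφθ
      rw [heq, hev₁ θ t htI, hev₂ θ t htI]
      have hdd : deriv (deriv (fun x => k₁ x t - k₂ x t)) θ
          = deriv (deriv (fun x => k₁ x t)) θ - deriv (deriv (fun x => k₂ x t)) θ := by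
        rw [deriv2_sub hK₁ hK₂]
      rw [hdd]; ring
    -- continuity facts for integrability
    have hcu : Continuous (fun x => h₁ x t - h₂ x t) := hu.continuous
    have hcV : Continuous (fun x => k₁ x t - k₂ x t) := hV.continuous
    have hcV'' : Continuous (deriv (deriv (fun x => k₁ x t - k₂ x t))) :=
      (contDiff_infty_iff_deriv.mp (contDiff_infty_iff_deriv.mp hV).2).2.continuous
    have hcu'' : Continuous (deriv (deriv (fun x => h₁ x t - h₂ x t))) :=
      (contDiff_infty_iff_deriv.mp (contDiff_infty_iff_deriv.mp hu).2).2.continuous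
    have int1 : IntervalIntegrable
        (fun θ => (h₁ θ t - h₂ θ t) * deriv (deriv (fun x => k₁ x t - k₂ x t)) θ)
        volume 0 (2*ω*π) := (hcu.mul hcV'').intervalIntegrable _ _
    have int2 : IntervalIntegrable (fun θ => (h₁ θ t - h₂ θ t) * (k₁ θ t - k₂ θ t))
        volume 0 (2*ω*π) := (hcu.mul hcV).intervalIntegrable _ _
    have int3 : IntervalIntegrable
        (fun θ => deriv (deriv (fun x => h₁ x t - h₂ x t)) θ * (k₁ θ t - k₂ θ t))
        volume 0 (2*ω*π) := (hcu''.mul hcV).intervalIntegrable _ _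
    -- compute the integral
    have step1 : (∫ θ in (0:ℝ)..(2*ω*π),
        fderiv ℝ (Function.uncurry (fun θ t => (h₁ θ t - h₂ θ t)^2)) (θ, t) (0, 1))
        = ∫ θ in (0:ℝ)..(2*ω*π), 2 * ((h₁ θ t - h₂ θ t) *
            deriv (deriv (fun x => k₁ x t - k₂ x t)) θ
          + (h₁ θ t - h₂ θ t) * (k₁ θ t - k₂ θ t)) :=
      intervalIntegral.integral_congr fun θ _ => by rw [hGpt θ]; ring
    have step2 : (∫ θ in (0:ℝ)..(2*ω*π), 2 * ((h₁ θ t - h₂ θ t) *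
            deriv (deriv (fun x => k₁ x t - k₂ x t)) θ
          + (h₁ θ t - h₂ θ t) * (k₁ θ t - k₂ θ t)))
        = 2 * ((∫ θ in (0:ℝ)..(2*ω*π),
            (h₁ θ t - h₂ θ t) * deriv (deriv (fun x => k₁ x t - k₂ x t)) θ)
          + ∫ θ in (0:ℝ)..(2*ω*π), (h₁ θ t - h₂ θ t) * (k₁ θ t - k₂ θ t)) := by
      rw [intervalIntegral.integral_const_mul, intervalIntegral.integral_add int1 int2]
    have step3 : (∫ θ in (0:ℝ)..(2*ω*π),
          (h₁ θ t - h₂ θ t) * deriv (deriv (fun x => k₁ x t - k₂ x t)) θ)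
        = ∫ θ in (0:ℝ)..(2*ω*π),
          deriv (deriv (fun x => h₁ x t - h₂ x t)) θ * (k₁ θ t - k₂ θ t) :=
      parts2 hu hV hpu hpV
    have step4 : (∫ θ in (0:ℝ)..(2*ω*π),
          deriv (deriv (fun x => h₁ x t - h₂ x t)) θ * (k₁ θ t - k₂ θ t))
        + (∫ θ in (0:ℝ)..(2*ω*π), (h₁ θ t - h₂ θ t) * (k₁ θ t - k₂ θ t))
        = ∫ θ in (0:ℝ)..(2*ω*π),
          (deriv (deriv (fun x => h₁ x t - h₂ x t)) θ + (h₁ θ t - h₂ θ t))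
            * (k₁ θ t - k₂ θ t) := by
      rw [← intervalIntegral.integral_add int3 int2]
      exact intervalIntegral.integral_congr fun θ _ => by ring
    have pointwise : ∀ θ ∈ Set.Icc (0:ℝ) (2*ω*π),
        (deriv (deriv (fun x => h₁ x t - h₂ x t)) θ + (h₁ θ t - h₂ θ t))
          * (k₁ θ t - k₂ θ t) ≤ 0 := by
      intro θ _
      have hdd : deriv (deriv (fun x => h₁ x t - h₂ x t)) θ
          = deriv (deriv (fun x => h₁ x t)) θ - deriv (deriv (fun x => h₂ x t)) θ := by
        rw [deriv2_sub hg₁ hg₂]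
      have ha : 0 < k₁ θ t := hk₁pos θ t htI
      have hb : 0 < k₂ θ t := hk₂pos θ t htI
      have hw1 : deriv (deriv (fun x => h₁ x t)) θ + h₁ θ t = 1 / k₁ θ t := by
        rw [hk₁ θ t, one_div_one_div]
      have hw2 : deriv (deriv (fun x => h₂ x t)) θ + h₂ θ t = 1 / k₂ θ t := by
        rw [hk₂ θ t, one_div_one_div]
      have hsum : deriv (deriv (fun x => h₁ x t - h₂ x t)) θ + (h₁ θ t - h₂ θ t)
          = 1 / k₁ θ t - 1 / k₂ θ t := by
        rw [hdd]; linarith [hw1, hw2]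
      rw [hsum]
      have hform : (1 / k₁ θ t - 1 / k₂ θ t) * (k₁ θ t - k₂ θ t)
          = -((k₁ θ t - k₂ θ t)^2 / (k₁ θ t * k₂ θ t)) := by
        field_simp
        ring
      rw [hform]
      have : 0 ≤ (k₁ θ t - k₂ θ t)^2 / (k₁ θ t * k₂ θ t) :=
        div_nonneg (sq_nonneg _) (le_of_lt (mul_pos ha hb))
      linarith
    have intfinal : (∫ θ in (0:ℝ)..(2*ω*π),
        (deriv (deriv (fun x => h₁ x t - h₂ x t)) θ + (h₁ θ t - h₂ θ t))
          * (k₁ θ t - k₂ θ t)) ≤ 0 := by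
      have hneg := intervalIntegral.integral_nonneg (μ := volume) (le_of_lt hLpos)
        (f := fun θ => -((deriv (deriv (fun x => h₁ x t - h₂ x t)) θ + (h₁ θ t - h₂ θ t))
          * (k₁ θ t - k₂ θ t)))
        (fun θ hθ => by simpa using neg_nonneg.mpr (pointwise θ hθ))
      rw [intervalIntegral.integral_neg] at hneg
      linarith
    rw [step1, step2, step3, step4]
    linarith
  apply antitoneOn_of_deriv_nonpos (convex_Ico 0 T)
  · exact fun t _ => (hF t).continuousAt.continuousWithinAt
  · rw [interior_Ico]
    exact fun t _ => (hF t).differentiableAt.differentiableWithinAt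
  · rw [interior_Ico]
    intro t ht
    rw [(hF t).deriv]
    exact key t ht
end

section
/- Let ω be a positive integer and let h : ℝ × [0, T) → ℝ be smooth and 2ωπ-periodic in θ, with k := 1/(h_{θθ} + h) positive and h_t = k_{θθ} + k. Then d/dt ∫₀^{2ωπ} h² dθ = 4ωπ. -/
open Real

private lemma periodic_deriv' {p : ℝ → ℝ} {c : ℝ} (hp : ∀ x, p (x + c) = p x) :
    ∀ x, deriv p (x + c) = deriv p x := by
  intro x
  rw [← deriv_comp_add_const p c x]
  congr 1
  funext y
  exact hp y

theorem support_L2_evolution (ω : ℕ) (hω : 0 < ω) (T : ℝ) (hT : 0 < T)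
    (h k : ℝ → ℝ → ℝ)
    (hs : ContDiff ℝ (⊤ : ℕ∞) (Function.uncurry h))
    (hper : ∀ t θ, h (θ + 2*ω*π) t = h θ t)
    (hk : ∀ θ t, k θ t = 1 / (deriv (deriv (fun x => h x t)) θ + h θ t))
    (hkpos : ∀ θ, ∀ t ∈ Set.Ico (0:ℝ) T, 0 < k θ t)
    (hev : ∀ θ, ∀ t ∈ Set.Ico (0:ℝ) T,
      deriv (fun s => h θ s) t = deriv (deriv (fun x => k x t)) θ + k θ t) :
    ∀ t ∈ Set.Ico (0:ℝ) T,
      deriv (fun s => ∫ θ in (0:ℝ)..(2*ω*π), (h θ s)^2) t = 4*ω*π := by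
  intro t ht
  have hπ : (0:ℝ) < π := Real.pi_pos
  set L : ℝ := 2*ω*π with hLdef
  have hLpos : 0 < L := by
    have : (0:ℝ) < (ω:ℝ) := by exact_mod_cast hω
    positivity
  -- slice functions
  set f : ℝ → ℝ := fun θ => h θ t with hfdef
  set g : ℝ → ℝ := fun θ => k θ t with hgdef
  have hs' : ContDiff ℝ (↑(⊤:ℕ∞)) (Function.uncurry h) := hs.of_le (by simp)
  have hfs : ContDiff ℝ (↑(⊤:ℕ∞)) f := hs'.comp (contDiff_id.prodMk contDiff_const)
  have hfper : ∀ θ, f (θ + L) = f θ := fun θ => hper t θ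
  set D : ℝ → ℝ := fun θ => deriv (deriv f) θ + f θ with hDdef
  have hf's : ContDiff ℝ (↑(⊤:ℕ∞)) (deriv f) := (contDiff_infty_iff_deriv.mp hfs).2
  have hf''s : ContDiff ℝ (↑(⊤:ℕ∞)) (deriv (deriv f)) := (contDiff_infty_iff_deriv.mp hf's).2
  have hDs : ContDiff ℝ (↑(⊤:ℕ∞)) D := hf''s.add hfs
  have hgD : ∀ θ, g θ = (D θ)⁻¹ := by
    intro θ
    rw [hgdef]
    simp only [hk θ t, one_div]; rfl
  have hDpos : ∀ θ, 0 < D θ := by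
    intro θ
    have h1 := hkpos θ t ht
    rw [show k θ t = g θ from rfl, hgD θ] at h1
    exact inv_pos.mp h1
  have hgs : ContDiff ℝ (↑(⊤:ℕ∞)) g := by
    have : ContDiff ℝ (↑(⊤:ℕ∞)) fun θ => (D θ)⁻¹ := hDs.inv (fun θ => (hDpos θ).ne')
    have hgeq : g = fun θ => (D θ)⁻¹ := funext hgD
    rw [hgeq]
    exact this
  have hdiff : (↑(⊤:ℕ∞) : WithTop ℕ∞) ≠ 0 := by simp
  -- periodicity
  have hf'per : ∀ θ, deriv f (θ + L) = deriv f θ := periodic_deriv' hfper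
  have hf''per : ∀ θ, deriv (deriv f) (θ + L) = deriv (deriv f) θ := periodic_deriv' hf'per
  have hDper : ∀ θ, D (θ + L) = D θ := fun θ => by
    simp only [hDdef]; rw [hf''per θ, hfper θ]
  have hgper : ∀ θ, g (θ + L) = g θ := fun θ => by rw [hgD, hgD, hDper]
  have hg'per : ∀ θ, deriv g (θ + L) = deriv g θ := periodic_deriv' hgper
  have hg's : ContDiff ℝ (↑(⊤:ℕ∞)) (deriv g) := (contDiff_infty_iff_deriv.mp hgs).2
  have hg''s : ContDiff ℝ (↑(⊤:ℕ∞)) (deriv (deriv g)) := (contDiff_infty_iff_deriv.mp hg's).2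
  -- boundary values
  have bf : f L = f 0 := by simpa using hfper 0
  have bf' : deriv f L = deriv f 0 := by simpa using hf'per 0
  have bg : g L = g 0 := by simpa using hgper 0
  have bg' : deriv g L = deriv g 0 := by simpa using hg'per 0
  -- integration by parts (twice)
  have parts1 : ∫ θ in (0:ℝ)..L, f θ * deriv (deriv g) θ
      = f L * deriv g L - f 0 * deriv g 0 - ∫ θ in (0:ℝ)..L, deriv f θ * deriv g θ :=
    intervalIntegral.integral_mul_deriv_eq_deriv_mul
      (fun x _ => ((hfs.differentiable hdiff) x).hasDerivAt)
      (fun x _ => ((hg's.differentiable hdiff) x).hasDerivAt)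
      ((hf's.continuous).intervalIntegrable 0 L)
      ((hg''s.continuous).intervalIntegrable 0 L)
  have parts2 : ∫ θ in (0:ℝ)..L, deriv f θ * deriv g θ
      = deriv f L * g L - deriv f 0 * g 0 - ∫ θ in (0:ℝ)..L, deriv (deriv f) θ * g θ :=
    intervalIntegral.integral_mul_deriv_eq_deriv_mul
      (fun x _ => ((hf's.differentiable hdiff) x).hasDerivAt)
      (fun x _ => ((hgs.differentiable hdiff) x).hasDerivAt)
      ((hf''s.continuous).intervalIntegrable 0 L)
      ((hg's.continuous).intervalIntegrable 0 L)
  have key1 : ∫ θ in (0:ℝ)..L, f θ * deriv (deriv g) θ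
      = ∫ θ in (0:ℝ)..L, deriv (deriv f) θ * g θ := by
    rw [parts1, parts2, bf, bf', bg, bg']; ring
  -- differentiation under the integral sign
  set H : ℝ × ℝ → ℝ := Function.uncurry h with hHdef
  have hHd : Differentiable ℝ H := hs'.differentiable hdiff
  set P : ℝ × ℝ → ℝ := fun p => fderiv ℝ H p (0, 1) with hPdef
  have hPderiv : ∀ θ s : ℝ, HasDerivAt (fun s => h θ s) (P (θ, s)) s := by
    intro θ s
    have h1 : HasFDerivAt H (fderiv ℝ H (θ, s)) (θ, s) := (hHd (θ, s)).hasFDerivAt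
    have h2 : HasDerivAt (fun s => ((θ, s) : ℝ × ℝ)) (((0:ℝ), (1:ℝ))) s :=
      (hasDerivAt_const s θ).prodMk (hasDerivAt_id s)
    exact h1.comp_hasDerivAt s h2
  have hPcont : Continuous P := (hs'.continuous_fderiv hdiff).clm_apply continuous_const
  have hF'deriv : ∀ θ s : ℝ, HasDerivAt (fun s => (h θ s)^2) (2 * H (θ, s) * P (θ, s)) s := by
    intro θ s
    have : HasDerivAt (fun s => (h θ s)^2) (↑2 * h θ s ^ (2 - 1) * P (θ, s)) s :=
      (hPderiv θ s).fun_pow 2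
    convert this using 1
    show (2:ℝ) * h θ s * P (θ, s) = _
    push_cast
    ring
  have hΦcont : Continuous (fun p : ℝ × ℝ => 2 * H p * P p) :=
    (continuous_const.mul hs'.continuous).mul hPcont
  have hK : IsCompact ((Set.Icc (0:ℝ) L) ×ˢ (Set.Icc (t-1) (t+1))) :=
    isCompact_Icc.prod isCompact_Icc
  obtain ⟨M, hM⟩ := hK.exists_bound_of_continuousOn hΦcont.continuousOn
  have hsliceC : ∀ s : ℝ, Continuous (fun θ => h θ s) := fun s =>
    hs'.continuous.comp (continuous_id.prodMk continuous_const)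
  have main := intervalIntegral.hasDerivAt_integral_of_dominated_loc_of_deriv_le
    (F := fun s θ => (h θ s)^2) (F' := fun s θ => 2 * H (θ, s) * P (θ, s))
    (x₀ := t) (bound := fun _ => M) (a := 0) (b := L)
    (μ := MeasureTheory.volume) (Metric.ball_mem_nhds t one_pos)
    (Filter.Eventually.of_forall fun s => (((hsliceC s).pow 2).aestronglyMeasurable))
    (((hsliceC t).pow 2).intervalIntegrable 0 L)
    ((hΦcont.comp (continuous_id.prodMk continuous_const)).aestronglyMeasurable)
    (Filter.Eventually.of_forall fun θ => fun hθ x hx => by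
      apply hM (θ, x)
      constructor
      · exact Set.Ioc_subset_Icc_self (by rwa [Set.uIoc_of_le hLpos.le] at hθ)
      · have := Metric.mem_ball.mp hx
        rw [Real.dist_eq] at this
        constructor <;> [linarith [abs_lt.mp this]; linarith [abs_lt.mp this]])
    (intervalIntegrable_const)
    (Filter.Eventually.of_forall fun θ => fun _ x _ => hF'deriv θ x)
  rw [main.2.deriv]
  -- compute the integral
  have hPval : ∀ θ : ℝ, P (θ, t) = deriv (deriv g) θ + g θ := by
    intro θ
    rw [← (hPderiv θ t).deriv]
    exact hev θ t ht
  have honeD : ∀ θ : ℝ, (deriv (deriv f) θ + f θ) * g θ = 1 := by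
    intro θ
    rw [hgD θ]
    exact mul_inv_cancel₀ (hDpos θ).ne'
  have intfg'' : IntervalIntegrable (fun θ => f θ * deriv (deriv g) θ) MeasureTheory.volume 0 L :=
    ((hfs.continuous).mul (hg''s.continuous)).intervalIntegrable 0 L
  have intfg : IntervalIntegrable (fun θ => f θ * g θ) MeasureTheory.volume 0 L :=
    ((hfs.continuous).mul (hgs.continuous)).intervalIntegrable 0 L
  calc ∫ θ in (0:ℝ)..L, 2 * H (θ, t) * P (θ, t)
      = ∫ θ in (0:ℝ)..L, (2 * (f θ * deriv (deriv g) θ) + 2 * (f θ * g θ)) := by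
        apply intervalIntegral.integral_congr
        intro x _
        show 2 * H (x, t) * P (x, t) = 2 * (f x * deriv (deriv g) x) + 2 * (f x * g x)
        rw [hPval x]
        show 2 * h x t * _ = _
        ring
    _ = 2 * (∫ θ in (0:ℝ)..L, f θ * deriv (deriv g) θ) + 2 * (∫ θ in (0:ℝ)..L, f θ * g θ) := by
        rw [intervalIntegral.integral_add (intfg''.const_mul 2) (intfg.const_mul 2),
          intervalIntegral.integral_const_mul, intervalIntegral.integral_const_mul]
    _ = 2 * (∫ θ in (0:ℝ)..L, deriv (deriv f) θ * g θ) + 2 * (∫ θ in (0:ℝ)..L, f θ * g θ) := by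
        rw [key1]
    _ = 2 * (∫ θ in (0:ℝ)..L, (deriv (deriv f) θ * g θ + f θ * g θ)) := by
        rw [intervalIntegral.integral_add (f := fun θ => deriv (deriv f) θ * g θ)
          (((hf''s.continuous).mul (hgs.continuous)).intervalIntegrable 0 L) intfg]
        ring
    _ = 2 * (∫ θ in (0:ℝ)..L, (1:ℝ)) := by
        congr 1
        apply intervalIntegral.integral_congr
        intro x _
        show deriv (deriv f) x * g x + f x * g x = (1:ℝ)
        rw [← honeD x]
        ring
    _ = 4*ω*π := by
        simp [hLdef]
        ring
end

section
/- Let ω be a positive integer and let h : ℝ × [0, T) → ℝ be smooth and 2ωπ-periodic in θ, with k := 1/(h_{θθ} + h) positive and h_t = k_{θθ} + k. Then d/dt ∫₀^{2ωπ} (h_{θθ})² dθ = -2 ∫₀^{2ωπ} ((log k)_{θθ})² dθ + 2 ∫₀^{2ωπ} k⁻⁴ (k_θ)⁴ dθ. -/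
open Real
open Function

noncomputable section

/-- partial derivative in first variable as fderiv -/
lemma pd1_eq {F : ℝ → ℝ → ℝ} (hF : ContDiff ℝ (⊤:ℕ∞) (uncurry F)) (x s : ℝ) :
    deriv (fun y => F y s) x = fderiv ℝ (uncurry F) (x, s) (1, 0) := by
  have hline : HasDerivAt (fun y : ℝ => (y, s)) ((1:ℝ), (0:ℝ)) x :=
    (hasDerivAt_id x).prodMk (hasDerivAt_const x s)
  have hG : HasFDerivAt (uncurry F) (fderiv ℝ (uncurry F) (x, s)) (x, s) :=
    (hF.differentiable (by simp) (x, s)).hasFDerivAt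
  have := hG.comp_hasDerivAt x hline
  exact this.deriv

lemma pd2_eq {F : ℝ → ℝ → ℝ} (hF : ContDiff ℝ (⊤:ℕ∞) (uncurry F)) (x t : ℝ) :
    deriv (fun s => F x s) t = fderiv ℝ (uncurry F) (x, t) (0, 1) := by
  have hline : HasDerivAt (fun s : ℝ => (x, s)) ((0:ℝ), (1:ℝ)) t :=
    (hasDerivAt_const t x).prodMk (hasDerivAt_id t)
  have hG : HasFDerivAt (uncurry F) (fderiv ℝ (uncurry F) (x, t)) (x, t) :=
    (hF.differentiable (by simp) (x, t)).hasFDerivAt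
  exact (hG.comp_hasDerivAt t hline).deriv

lemma fderiv_apply_smooth {G : ℝ × ℝ → ℝ} (hG : ContDiff ℝ (⊤:ℕ∞) G) (v : ℝ × ℝ) :
    ContDiff ℝ (⊤:ℕ∞) (fun p : ℝ × ℝ => fderiv ℝ G p v) :=
  (hG.fderiv_right (by exact_mod_cast le_top)).clm_apply contDiff_const

lemma clairaut {F : ℝ → ℝ → ℝ} (hF : ContDiff ℝ (⊤:ℕ∞) (uncurry F)) (x t : ℝ) :
    deriv (fun s => deriv (fun y => F y s) x) t
      = deriv (fun y => deriv (fun s => F y s) t) x := by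
  have h1 : (fun s => deriv (fun y => F y s) x)
      = fun s => fderiv ℝ (uncurry F) (x, s) ((1:ℝ), (0:ℝ)) := by
    funext s; exact pd1_eq hF x s
  have h2 : (fun y => deriv (fun s => F y s) t)
      = fun y => fderiv ℝ (uncurry F) (y, t) ((0:ℝ), (1:ℝ)) := by
    funext y; exact pd2_eq hF y t
  rw [h1, h2]
  -- both sides are directional derivatives of p ↦ fderiv (uncurry F) p v
  have hs1 := pd2_eq (F := fun y s => fderiv ℝ (uncurry F) (y, s) ((1:ℝ), (0:ℝ)))
    (by exact fderiv_apply_smooth hF _) x t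
  have hs2 := pd1_eq (F := fun y s => fderiv ℝ (uncurry F) (y, s) ((0:ℝ), (1:ℝ)))
    (by exact fderiv_apply_smooth hF _) x t
  rw [hs1, hs2]
  -- now express fderiv of (p ↦ fderiv G p v) via second derivative and use symmetry
  have key : ∀ v w : ℝ × ℝ, fderiv ℝ (fun p : ℝ × ℝ => fderiv ℝ (uncurry F) p v) (x, t) w
      = fderiv ℝ (fderiv ℝ (uncurry F)) (x, t) w v := by
    intro v w
    have hinf : ((⊤:ℕ∞):WithTop ℕ∞) + 1 ≤ ((⊤:ℕ∞):WithTop ℕ∞) := by exact_mod_cast le_top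
    have h1le : ((⊤:ℕ∞):WithTop ℕ∞) ≠ 0 := by simp
    rw [fderiv_clm_apply ((hF.fderiv_right (m := ((⊤:ℕ∞):WithTop ℕ∞)) hinf).differentiable h1le _) (differentiableAt_const v)]
    simp
  have e1 : (uncurry fun y s => fderiv ℝ (uncurry F) (y, s) ((1:ℝ), (0:ℝ)))
      = fun p : ℝ × ℝ => fderiv ℝ (uncurry F) p ((1:ℝ), (0:ℝ)) := rfl
  have e2 : (uncurry fun y s => fderiv ℝ (uncurry F) (y, s) ((0:ℝ), (1:ℝ)))
      = fun p : ℝ × ℝ => fderiv ℝ (uncurry F) p ((0:ℝ), (1:ℝ)) := rfl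
  rw [e1, e2, key, key]
  have hsymm : IsSymmSndFDerivAt ℝ (uncurry F) (x, t) :=
    (hF.contDiffAt).isSymmSndFDerivAt (by rw [minSmoothness_of_isRCLikeNormedField]; exact WithTop.coe_le_coe.mpr le_top)
  exact hsymm _ _

lemma pd1_smooth {F : ℝ → ℝ → ℝ} (hF : ContDiff ℝ (⊤:ℕ∞) (uncurry F)) :
    ContDiff ℝ (⊤:ℕ∞) (uncurry (fun y s => deriv (fun x => F x s) y)) := by
  have : (uncurry (fun y s => deriv (fun x => F x s) y))
      = fun p : ℝ × ℝ => fderiv ℝ (uncurry F) p ((1:ℝ), (0:ℝ)) := by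
    funext p
    exact pd1_eq hF p.1 p.2
  rw [this]
  exact fderiv_apply_smooth hF _

lemma periodic_deriv {f : ℝ → ℝ} {L : ℝ} (hf : Function.Periodic f L) :
    Function.Periodic (deriv f) L := by
  intro x
  have : (fun y => f (y + L)) = f := funext hf
  calc deriv f (x + L) = deriv (fun y => f (y + L)) x := (deriv_comp_add_const f L x).symm
  _ = deriv f x := by rw [this]

lemma cd_deriv {f : ℝ → ℝ} (hf : ContDiff ℝ (⊤:ℕ∞) f) : ContDiff ℝ (⊤:ℕ∞) (deriv f) :=
  (contDiff_infty_iff_deriv.mp hf).2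

/-- single integration by parts for periodic functions -/
lemma ibp1 {f g : ℝ → ℝ} {L : ℝ} (hf : ContDiff ℝ (⊤:ℕ∞) f) (hg : ContDiff ℝ (⊤:ℕ∞) g)
    (hfp : Function.Periodic f L) (hgp : Function.Periodic g L) :
    ∫ x in (0:ℝ)..L, deriv f x * g x = -∫ x in (0:ℝ)..L, f x * deriv g x := by
  have key : ∫ x in (0:ℝ)..L, deriv f x * g x + f x * deriv g x = f L * g L - f 0 * g 0 :=
    intervalIntegral.integral_deriv_mul_eq_sub_of_hasDerivAt
      (hf.continuous.continuousOn) (hg.continuous.continuousOn)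
      (fun x _ => ((hf.differentiable (by simp)) x).hasDerivAt)
      (fun x _ => ((hg.differentiable (by simp)) x).hasDerivAt)
      (((cd_deriv hf).continuous).intervalIntegrable _ _)
      (((cd_deriv hg).continuous).intervalIntegrable _ _)
  have hL : f L * g L - f 0 * g 0 = 0 := by
    have h1 : f L = f 0 := by simpa using hfp 0
    have h2 : g L = g 0 := by simpa using hgp 0
    rw [h1, h2]; ring
  rw [intervalIntegral.integral_add (f := fun x => deriv f x * g x) (g := fun x => f x * deriv g x)
      (((cd_deriv hf).continuous.mul hg.continuous).intervalIntegrable _ _)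
      ((hf.continuous.mul (cd_deriv hg).continuous).intervalIntegrable _ _)] at key
  rw [hL] at key
  linarith

lemma ibp2 {f g : ℝ → ℝ} {L : ℝ} (hf : ContDiff ℝ (⊤:ℕ∞) f) (hg : ContDiff ℝ (⊤:ℕ∞) g)
    (hfp : Function.Periodic f L) (hgp : Function.Periodic g L) :
    ∫ x in (0:ℝ)..L, deriv (deriv f) x * g x = ∫ x in (0:ℝ)..L, f x * deriv (deriv g) x := by
  rw [ibp1 (cd_deriv hf) hg (periodic_deriv hfp) hgp]
  have e : ∫ x in (0:ℝ)..L, deriv f x * deriv g x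
      = -∫ x in (0:ℝ)..L, f x * deriv (deriv g) x :=
    ibp1 hf (cd_deriv hg) hfp (periodic_deriv hgp)
  rw [e]; ring

lemma pd2_hasDeriv {F : ℝ → ℝ → ℝ} (hF : ContDiff ℝ (⊤:ℕ∞) (uncurry F)) (x t : ℝ) :
    HasDerivAt (fun s => F x s) (fderiv ℝ (uncurry F) (x, t) ((0:ℝ), (1:ℝ))) t := by
  have hline : HasDerivAt (fun s : ℝ => (x, s)) ((0:ℝ), (1:ℝ)) t :=
    (hasDerivAt_const t x).prodMk (hasDerivAt_id t)
  have hG : HasFDerivAt (uncurry F) (fderiv ℝ (uncurry F) (x, t)) (x, t) :=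
    (hF.differentiable (by simp) (x, t)).hasFDerivAt
  exact hG.comp_hasDerivAt t hline

lemma deriv_under_integral {G : ℝ → ℝ → ℝ} (hG : ContDiff ℝ (⊤:ℕ∞) (uncurry G))
    (a b t : ℝ) :
    HasDerivAt (fun s => ∫ θ in a..b, G θ s)
      (∫ θ in a..b, deriv (fun s => G θ s) t) t := by
  set D : ℝ × ℝ → ℝ := fun p => fderiv ℝ (uncurry G) p ((0:ℝ), (1:ℝ)) with hD
  have hDc : Continuous D := (fderiv_apply_smooth hG _).continuous
  -- compact bound
  obtain ⟨C, hC⟩ : ∃ C, ∀ p ∈ (Set.uIcc a b ×ˢ Metric.closedBall t 1), ‖D p‖ ≤ C :=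
    (isCompact_uIcc.prod (isCompact_closedBall t 1)).exists_bound_of_continuousOn
      hDc.continuousOn
  have main := intervalIntegral.hasDerivAt_integral_of_dominated_loc_of_deriv_le
    (F := fun x θ => G θ x) (F' := fun x θ => D (θ, x)) (x₀ := t)
    (a := a) (b := b) (bound := fun _ => C) (s := Metric.ball t 1) (Metric.ball_mem_nhds t one_pos)
    (Filter.Eventually.of_forall fun x =>
      ((hG.continuous.comp (continuous_id.prodMk continuous_const)).aestronglyMeasurable))
    ((hG.continuous.comp (continuous_id.prodMk continuous_const)).intervalIntegrable _ _)
    ((hDc.comp (continuous_id.prodMk continuous_const)).aestronglyMeasurable)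
    (Filter.Eventually.of_forall fun θ hθ x hx => by
      refine hC (θ, x) ?_
      exact ⟨Set.uIoc_subset_uIcc hθ, Metric.ball_subset_closedBall hx⟩)
    (intervalIntegrable_const (μ := MeasureTheory.volume))
    (Filter.Eventually.of_forall fun θ hθ x hx => pd2_hasDeriv hG θ x)
  have : (fun θ => deriv (fun s => G θ s) t) = fun θ => D (θ, t) := by
    funext θ; exact (pd2_hasDeriv hG θ t).deriv
  rw [this]
  exact main.2

theorem second_seminorm_evolution (ω : ℕ) (hω : 0 < ω) (T : ℝ) (hT : 0 < T)
    (h k : ℝ → ℝ → ℝ)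
    (hs : ContDiff ℝ (⊤ : ℕ∞) (Function.uncurry h))
    (hper : ∀ t θ, h (θ + 2*ω*π) t = h θ t)
    (hk : ∀ θ t, k θ t = 1 / (deriv (deriv (fun x => h x t)) θ + h θ t))
    (hkpos : ∀ θ, ∀ t ∈ Set.Ico (0:ℝ) T, 0 < k θ t)
    (hev : ∀ θ, ∀ t ∈ Set.Ico (0:ℝ) T,
      deriv (fun s => h θ s) t = deriv (deriv (fun x => k x t)) θ + k θ t) :
    ∀ t ∈ Set.Ico (0:ℝ) T,
      deriv (fun s => ∫ θ in (0:ℝ)..(2*ω*π), (deriv (deriv (fun x => h x s)) θ)^2) t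
        = -2 * (∫ θ in (0:ℝ)..(2*ω*π),
              (deriv (deriv (fun x => Real.log (k x t))) θ)^2)
          + 2 * ∫ θ in (0:ℝ)..(2*ω*π),
              (k θ t)⁻¹^4 * (deriv (fun x => k x t) θ)^4 := by
  intro t ht
  have hs' : ContDiff ℝ ((⊤:ℕ∞):WithTop ℕ∞) (uncurry h) := hs.of_le (by simp)
  set L : ℝ := 2*ω*π with hL
  -- curried partial θ-derivatives of h
  set h1 : ℝ → ℝ → ℝ := fun y s => deriv (fun x => h x s) y with hh1def
  have hh1 : ContDiff ℝ (⊤:ℕ∞) (uncurry h1) := pd1_smooth hs'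
  set h2 : ℝ → ℝ → ℝ := fun y s => deriv (fun x => h1 x s) y with hh2def
  have hh2 : ContDiff ℝ (⊤:ℕ∞) (uncurry h2) := pd1_smooth hh1
  have hG : ContDiff ℝ (⊤:ℕ∞) (uncurry (fun θ s => (h2 θ s)^2)) := hh2.pow 2
  -- fixed-time slices
  set f : ℝ → ℝ := fun x => h x t with hfdef
  have hf : ContDiff ℝ (⊤:ℕ∞) f := hs'.comp (contDiff_id.prodMk contDiff_const)
  set K : ℝ → ℝ := fun x => k x t with hKdef
  have hKpos : ∀ x, 0 < K x := fun x => hkpos x t ht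
  have hKne : ∀ x, K x ≠ 0 := fun x => ne_of_gt (hKpos x)
  set u : ℝ → ℝ := fun x => deriv (deriv f) x + f x with hudef
  have hKu : ∀ x, K x = (u x)⁻¹ := fun x => by
    rw [show K x = k x t from rfl, hk x t, one_div]
  have hupos : ∀ x, 0 < u x := fun x => inv_pos.mp (hKu x ▸ hKpos x)
  have hune : ∀ x, u x ≠ 0 := fun x => ne_of_gt (hupos x)
  have huK : ∀ x, u x = (K x)⁻¹ := by
    intro x; rw [hKu x, inv_inv]
  have hu : ContDiff ℝ (⊤:ℕ∞) u := (cd_deriv (cd_deriv hf)).add hf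
  have hKc : ContDiff ℝ (⊤:ℕ∞) K := by
    have : K = fun x => (u x)⁻¹ := funext hKu
    rw [this]; exact hu.inv hune
  -- periodicity
  have hfp : Function.Periodic f L := fun x => hper t x
  have hup : Function.Periodic u L := by
    intro x
    simp only [hudef]
    rw [periodic_deriv (periodic_deriv hfp) x, hfp x]
  have hKp : Function.Periodic K L := by
    intro x; rw [hKu, hKu, hup x]
  set W : ℝ → ℝ := fun y => deriv (deriv K) y + K y with hWdef
  have hWc : ContDiff ℝ (⊤:ℕ∞) W := (cd_deriv (cd_deriv hKc)).add hKc
  have hWp : Function.Periodic W L := by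
    intro x
    simp only [hWdef]
    rw [periodic_deriv (periodic_deriv hKp) x, hKp x]
  -- Step 1: differentiate under the integral sign
  have step1 : deriv (fun s => ∫ θ in (0:ℝ)..L, (deriv (deriv (fun x => h x s)) θ)^2) t
      = ∫ θ in (0:ℝ)..L, deriv (fun s => (h2 θ s)^2) t := by
    have hd := deriv_under_integral hG 0 L t
    exact hd.deriv
  -- Step 2: pointwise identification of the time derivative via Clairaut + evolution eq.
  have hVW : (fun x => deriv (fun s => h x s) t) = W := by
    funext x
    rw [hev x t ht]
  have step2 : ∀ θ : ℝ, deriv (fun s => (h2 θ s)^2) t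
      = 2 * h2 θ t * deriv (deriv W) θ := by
    intro θ
    have hd : HasDerivAt (fun s => h2 θ s)
        (fderiv ℝ (uncurry h2) (θ, t) ((0:ℝ), (1:ℝ))) t := pd2_hasDeriv hh2 θ t
    have hpow := (hd.pow 2).deriv
    have hc1 : deriv (fun s => h2 θ s) t
        = deriv (fun y => deriv (fun s => h1 y s) t) θ := clairaut hh1 θ t
    have hc2 : (fun y => deriv (fun s => h1 y s) t)
        = fun y => deriv (fun x => deriv (fun s => h x s) t) y := by
      funext y; exact clairaut hs' y t
    have hderiv_t : deriv (fun s => h2 θ s) t = deriv (deriv W) θ := by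
      rw [hc1, hc2, hVW]
    rw [show (fun s => h2 θ s ^ 2) = (fun s => h2 θ s) ^ 2 from rfl, hpow, ← hd.deriv, hderiv_t]
    ring
  have step12 : deriv (fun s => ∫ θ in (0:ℝ)..L, (deriv (deriv (fun x => h x s)) θ)^2) t
      = ∫ θ in (0:ℝ)..L, 2 * (deriv (deriv f) θ) * deriv (deriv W) θ := by
    rw [step1]
    apply intervalIntegral.integral_congr
    intro θ _
    exact step2 θ
  -- Step 3: integration by parts
  have hf2 : ContDiff ℝ (⊤:ℕ∞) (deriv (deriv f)) := cd_deriv (cd_deriv hf)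
  have hf2p : Function.Periodic (deriv (deriv f)) L := periodic_deriv (periodic_deriv hfp)
  have hK2 : ContDiff ℝ (⊤:ℕ∞) (deriv (deriv K)) := cd_deriv (cd_deriv hKc)
  have hK2p : Function.Periodic (deriv (deriv K)) L := periodic_deriv (periodic_deriv hKp)
  have ibpA : ∫ θ in (0:ℝ)..L, (deriv (deriv f)) θ * deriv (deriv W) θ
      = ∫ θ in (0:ℝ)..L, deriv (deriv (deriv (deriv f))) θ * W θ :=
    (ibp2 hf2 hWc hf2p hWp).symm
  have splitW : ∫ θ in (0:ℝ)..L, deriv (deriv (deriv (deriv f))) θ * W θ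
      = (∫ θ in (0:ℝ)..L, deriv (deriv (deriv (deriv f))) θ * deriv (deriv K) θ)
        + ∫ θ in (0:ℝ)..L, deriv (deriv (deriv (deriv f))) θ * K θ := by
    rw [← intervalIntegral.integral_add (f := fun θ => deriv (deriv (deriv (deriv f))) θ * deriv (deriv K) θ)
      (g := fun θ => deriv (deriv (deriv (deriv f))) θ * K θ)
      (((cd_deriv (cd_deriv hf2)).continuous.mul hK2.continuous).intervalIntegrable _ _)
      (((cd_deriv (cd_deriv hf2)).continuous.mul hKc.continuous).intervalIntegrable _ _)]
    apply intervalIntegral.integral_congr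
    intro θ _
    show deriv (deriv (deriv (deriv f))) θ * (deriv (deriv K) θ + K θ) = _
    ring
  have ibpB : ∫ θ in (0:ℝ)..L, deriv (deriv (deriv (deriv f))) θ * K θ
      = ∫ θ in (0:ℝ)..L, (deriv (deriv f)) θ * deriv (deriv K) θ :=
    ibp2 hf2 hKc hf2p hKp
  -- u'' = f'''' + f''
  have h1le : ((⊤:ℕ∞):WithTop ℕ∞) ≠ 0 := by simp
  have hu2 : ∀ θ, deriv (deriv u) θ
      = deriv (deriv (deriv (deriv f))) θ + deriv (deriv f) θ := by
    intro θ
    have hdu : deriv u = fun x => deriv (deriv (deriv f)) x + deriv f x := by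
      funext x
      rw [hudef]
      exact deriv_add ((hf2.differentiable h1le) x) ((hf.differentiable h1le) x)
    rw [hdu]
    exact deriv_add (((cd_deriv hf2).differentiable h1le) θ)
      (((cd_deriv hf).differentiable h1le) θ)
  -- assemble step 3
  have step3 : ∫ θ in (0:ℝ)..L, 2 * (deriv (deriv f) θ) * deriv (deriv W) θ
      = ∫ θ in (0:ℝ)..L, 2 * deriv (deriv u) θ * deriv (deriv K) θ := by
    have eL : ∫ θ in (0:ℝ)..L, 2 * (deriv (deriv f) θ) * deriv (deriv W) θ
        = 2 * ∫ θ in (0:ℝ)..L, (deriv (deriv f) θ) * deriv (deriv W) θ := by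
      rw [← intervalIntegral.integral_const_mul]
      apply intervalIntegral.integral_congr
      intro θ _; ring
    have eR : ∫ θ in (0:ℝ)..L, 2 * deriv (deriv u) θ * deriv (deriv K) θ
        = 2 * ∫ θ in (0:ℝ)..L, deriv (deriv u) θ * deriv (deriv K) θ := by
      rw [← intervalIntegral.integral_const_mul]
      apply intervalIntegral.integral_congr
      intro θ _; ring
    have eU : ∫ θ in (0:ℝ)..L, deriv (deriv u) θ * deriv (deriv K) θ
        = (∫ θ in (0:ℝ)..L, deriv (deriv (deriv (deriv f))) θ * deriv (deriv K) θ)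
          + ∫ θ in (0:ℝ)..L, (deriv (deriv f)) θ * deriv (deriv K) θ := by
      rw [← intervalIntegral.integral_add (f := fun θ => deriv (deriv (deriv (deriv f))) θ * deriv (deriv K) θ)
        (g := fun θ => deriv (deriv f) θ * deriv (deriv K) θ)
        (((cd_deriv (cd_deriv hf2)).continuous.mul hK2.continuous).intervalIntegrable _ _)
        ((hf2.continuous.mul hK2.continuous).intervalIntegrable _ _)]
      apply intervalIntegral.integral_congr
      intro θ _
      show deriv (deriv u) θ * deriv (deriv K) θ = _
      rw [hu2 θ]; ring
    rw [eL, eR, ibpA, splitW, ibpB, eU]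
  -- Step 4: pointwise algebraic identity
  have hKdiff : Differentiable ℝ K := hKc.differentiable h1le
  have hK1diff : Differentiable ℝ (deriv K) := (cd_deriv hKc).differentiable h1le
  have hlog1 : deriv (fun x => Real.log (K x)) = fun x => deriv K x / K x := by
    funext x
    exact (((hKdiff x).hasDerivAt).log (hKne x)).deriv
  have hlog2 : ∀ θ, deriv (deriv (fun x => Real.log (K x))) θ
      = (deriv (deriv K) θ * K θ - deriv K θ * deriv K θ) / (K θ)^2 := by
    intro θ
    rw [hlog1]
    exact (((hK1diff θ).hasDerivAt).div ((hKdiff θ).hasDerivAt) (hKne θ)).deriv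
  have hu1 : deriv u = fun x => -deriv K x / (K x)^2 := by
    have : u = fun x => (K x)⁻¹ := funext huK
    rw [this]
    funext x
    exact (((hKdiff x).hasDerivAt).inv (hKne x)).deriv
  have huu2 : ∀ θ, deriv (deriv u) θ
      = (-(deriv (deriv K) θ) * (K θ)^2 - (-(deriv K θ)) * ((2:ℕ) * (K θ)^(2-1) * deriv K θ))
        / ((K θ)^2)^2 := by
    intro θ
    rw [hu1]
    have hnum : HasDerivAt (fun x => -deriv K x) (-(deriv (deriv K) θ)) θ :=
      ((hK1diff θ).hasDerivAt).neg
    have hden : HasDerivAt (fun x => (K x)^2) ((2:ℕ) * (K θ)^(2-1) * deriv K θ) θ :=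
      ((hKdiff θ).hasDerivAt).pow 2
    have hd2 : (K θ)^2 ≠ 0 := pow_ne_zero 2 (hKne θ)
    exact (hnum.div hden hd2).deriv
  have step4 : ∀ θ, 2 * deriv (deriv u) θ * deriv (deriv K) θ
      = -2 * (deriv (deriv (fun x => Real.log (K x))) θ)^2
        + 2 * (K θ)⁻¹^4 * (deriv K θ)^4 := by
    intro θ
    rw [huu2 θ, hlog2 θ]
    have := hKne θ
    field_simp
    ring
  -- smoothness of the RHS integrands
  have hlogc : ContDiff ℝ (⊤:ℕ∞) (fun x => Real.log (K x)) := hKc.log hKne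
  have ha_cont : Continuous (fun θ => (deriv (deriv (fun x => Real.log (K x))) θ)^2) :=
    ((cd_deriv (cd_deriv hlogc)).continuous).pow 2
  have hb_cont : Continuous (fun θ => (K θ)⁻¹^4 * (deriv K θ)^4) :=
    (((hKc.inv hKne).continuous).pow 4).mul (((cd_deriv hKc).continuous).pow 4)
  -- final assembly
  rw [step12, step3]
  have split : ∫ θ in (0:ℝ)..L, 2 * deriv (deriv u) θ * deriv (deriv K) θ
      = (∫ θ in (0:ℝ)..L, -2 * (deriv (deriv (fun x => Real.log (K x))) θ)^2)
        + ∫ θ in (0:ℝ)..L, 2 * (K θ)⁻¹^4 * (deriv K θ)^4 := by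
    rw [← intervalIntegral.integral_add (f := fun θ => -2 * (deriv (deriv (fun x => Real.log (K x))) θ)^2)
      (g := fun θ => 2 * (K θ)⁻¹^4 * (deriv K θ)^4)
      ((continuous_const.mul ha_cont).intervalIntegrable _ _)
      (((continuous_const.mul (((hKc.inv hKne).continuous).pow 4)).mul
        (((cd_deriv hKc).continuous).pow 4)).intervalIntegrable _ _)]
    apply intervalIntegral.integral_congr
    intro θ _
    show 2 * deriv (deriv u) θ * deriv (deriv K) θ = _
    rw [step4 θ]
  rw [split]
  have c1 : ∫ θ in (0:ℝ)..L, -2 * (deriv (deriv (fun x => Real.log (K x))) θ)^2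
      = -2 * ∫ θ in (0:ℝ)..L, (deriv (deriv (fun x => Real.log (K x))) θ)^2 :=
    intervalIntegral.integral_const_mul _ _
  have c2 : ∫ θ in (0:ℝ)..L, 2 * (K θ)⁻¹^4 * (deriv K θ)^4
      = 2 * ∫ θ in (0:ℝ)..L, (K θ)⁻¹^4 * (deriv K θ)^4 := by
    rw [← intervalIntegral.integral_const_mul]
    apply intervalIntegral.integral_congr
    intro θ _; ring
  rw [c1, c2]

end
end

section
/- Let ω be a positive integer and let k : ℝ × [0, T) → ℝ be a smooth positive 2ωπ-periodic (in θ) function, F := k_{θθ} + k, satisfying k_t = -k²(F_{θθ} + F). Then d/dt ∫₀^{2ωπ} F² dθ = -2 ∫₀^{2ωπ} (k(F_{θθ} + F))² dθ ≤ 0. In particular the entropy E(t) = ∫ log k dθ, which satisfies E' = -∫F² dθ, is convex in time. -/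
open Real MeasureTheory Set

noncomputable def pd1 (f : ℝ × ℝ → ℝ) (p : ℝ × ℝ) : ℝ := fderiv ℝ f p (1, 0)
noncomputable def pd2 (f : ℝ × ℝ → ℝ) (p : ℝ × ℝ) : ℝ := fderiv ℝ f p (0, 1)

lemma pd1_smooth_s11 {f : ℝ × ℝ → ℝ} (hf : ContDiff ℝ (⊤ : ℕ∞) f) : ContDiff ℝ (⊤ : ℕ∞) (pd1 f) :=
  (hf.fderiv_right (by simp)).clm_apply contDiff_const

lemma pd2_smooth {f : ℝ × ℝ → ℝ} (hf : ContDiff ℝ (⊤ : ℕ∞) f) : ContDiff ℝ (⊤ : ℕ∞) (pd2 f) :=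
  (hf.fderiv_right (by simp)).clm_apply contDiff_const

lemma hasDerivAt_slice1 {f : ℝ × ℝ → ℝ} (hf : Differentiable ℝ f) (t θ : ℝ) :
    HasDerivAt (fun x => f (x, t)) (pd1 f (θ, t)) θ := by
  have h1 : HasDerivAt (fun x : ℝ => (x, t)) ((1:ℝ), (0:ℝ)) θ :=
    (hasDerivAt_id θ).prodMk (hasDerivAt_const θ t)
  exact (hf (θ, t)).hasFDerivAt.comp_hasDerivAt θ h1

lemma hasDerivAt_slice2 {f : ℝ × ℝ → ℝ} (hf : Differentiable ℝ f) (θ t : ℝ) :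
    HasDerivAt (fun s => f (θ, s)) (pd2 f (θ, t)) t := by
  have h1 : HasDerivAt (fun s : ℝ => (θ, s)) ((0:ℝ), (1:ℝ)) t :=
    (hasDerivAt_const t θ).prodMk (hasDerivAt_id t)
  exact (hf (θ, t)).hasFDerivAt.comp_hasDerivAt t h1

lemma deriv_slice1 {f : ℝ × ℝ → ℝ} (hf : Differentiable ℝ f) (t : ℝ) :
    deriv (fun x => f (x, t)) = fun x => pd1 f (x, t) :=
  funext fun x => (hasDerivAt_slice1 hf t x).deriv

lemma pd_swap {f : ℝ × ℝ → ℝ} (hf : ContDiff ℝ (⊤ : ℕ∞) f) : pd1 (pd2 f) = pd2 (pd1 f) := by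
  funext p
  have hdf : Differentiable ℝ (fderiv ℝ f) := (hf.fderiv_right (m := (⊤ : ℕ∞)) (by simp)).differentiable (by simp)
  have hsymm : ∀ v w : ℝ × ℝ, fderiv ℝ (fderiv ℝ f) p v w = fderiv ℝ (fderiv ℝ f) p w v :=
    second_derivative_symmetric (fun y => ((hf.differentiable (by simp)) y).hasFDerivAt)
      (hdf p).hasFDerivAt
  have key : ∀ v w : ℝ × ℝ, fderiv ℝ (fun q => fderiv ℝ f q v) p w
      = fderiv ℝ (fderiv ℝ f) p w v := by
    intro v w
    have h : HasFDerivAt (fun q => fderiv ℝ f q v)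
        ((ContinuousLinearMap.apply ℝ ℝ v).comp (fderiv ℝ (fderiv ℝ f) p)) p :=
      (ContinuousLinearMap.apply ℝ ℝ v).hasFDerivAt.comp p (hdf p).hasFDerivAt
    rw [h.fderiv]; rfl
  show fderiv ℝ (fun q => fderiv ℝ f q ((0:ℝ), (1:ℝ))) p (1, 0)
      = fderiv ℝ (fun q => fderiv ℝ f q ((1:ℝ), (0:ℝ))) p (0, 1)
  rw [key, key]
  exact hsymm _ _

lemma fderiv_periodic {f : ℝ × ℝ → ℝ} {c : ℝ × ℝ} (hf : Differentiable ℝ f)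
    (hp : ∀ p, f (p + c) = f p) (p : ℝ × ℝ) : fderiv ℝ f (p + c) = fderiv ℝ f p := by
  have htr : HasFDerivAt (fun q : ℝ × ℝ => q + c) (ContinuousLinearMap.id ℝ (ℝ × ℝ)) p :=
    (hasFDerivAt_id p).add_const c
  have h : HasFDerivAt (fun q => f (q + c)) ((fderiv ℝ f (p + c)).comp
      (ContinuousLinearMap.id ℝ (ℝ × ℝ))) p := (hf (p + c)).hasFDerivAt.comp p htr
  have hfun : (fun q => f (q + c)) = f := funext hp
  rw [hfun] at h
  rw [h.fderiv, ContinuousLinearMap.comp_id]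

lemma pd1_periodic {f : ℝ × ℝ → ℝ} {c : ℝ × ℝ} (hf : Differentiable ℝ f)
    (hp : ∀ p, f (p + c) = f p) (p : ℝ × ℝ) : pd1 f (p + c) = pd1 f p := by
  simp only [pd1, fderiv_periodic hf hp p]

lemma pd2_periodic {f : ℝ × ℝ → ℝ} {c : ℝ × ℝ} (hf : Differentiable ℝ f)
    (hp : ∀ p, f (p + c) = f p) (p : ℝ × ℝ) : pd2 f (p + c) = pd2 f p := by
  simp only [pd2, fderiv_periodic hf hp p]

lemma slice1_cont {f : ℝ × ℝ → ℝ} (hf : Continuous f) (t : ℝ) :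
    Continuous (fun x => f (x, t)) := hf.comp (continuous_id.prodMk continuous_const)

lemma slice2_cont {f : ℝ × ℝ → ℝ} (hf : Continuous f) (θ : ℝ) :
    Continuous (fun s => f (θ, s)) := hf.comp (continuous_const.prodMk continuous_id)

lemma pd2_add {f g : ℝ × ℝ → ℝ} (hf : Differentiable ℝ f) (hg : Differentiable ℝ g)
    (p : ℝ × ℝ) : pd2 (fun q => f q + g q) p = pd2 f p + pd2 g p := by
  simp [pd2, fderiv_fun_add (hf p) (hg p)]

lemma pd2_sq {f : ℝ × ℝ → ℝ} (hf : Differentiable ℝ f) (p : ℝ × ℝ) :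
    pd2 (fun q => f q ^ 2) p = 2 * f p * pd2 f p := by
  have h : (fun q => f q ^ 2) = fun q => f q * f q := by funext q; ring
  rw [h, pd2, fderiv_fun_mul (hf p) (hf p)]
  simp [pd2]
  ring

lemma hasDerivAt_intervalIntegral_param {g : ℝ × ℝ → ℝ} (hg : ContDiff ℝ (⊤ : ℕ∞) g)
    (a b t₀ : ℝ) :
    HasDerivAt (fun t => ∫ x in a..b, g (x, t)) (∫ x in a..b, pd2 g (x, t₀)) t₀ := by
  have hgd : Differentiable ℝ g := hg.differentiable (by simp)
  have hc2 : Continuous (pd2 g) := (pd2_smooth hg).continuous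
  obtain ⟨C, hC⟩ : ∃ C, ∀ p ∈ (Set.uIcc a b ×ˢ Set.Icc (t₀-1) (t₀+1)), ‖pd2 g p‖ ≤ C :=
    (isCompact_uIcc.prod isCompact_Icc).exists_bound_of_continuousOn hc2.continuousOn
  refine (intervalIntegral.hasDerivAt_integral_of_dominated_loc_of_deriv_le
    (F := fun t x => g (x, t)) (F' := fun t x => pd2 g (x, t)) (bound := fun _ => C)
    (Metric.ball_mem_nhds t₀ one_pos) ?_ ?_ ?_ ?_ ?_ ?_).2
  · exact Filter.Eventually.of_forall fun t =>
      (slice1_cont hgd.continuous t).aestronglyMeasurable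
  · exact (slice1_cont hgd.continuous t₀).intervalIntegrable a b
  · exact (slice1_cont hc2 t₀).aestronglyMeasurable
  · refine Filter.Eventually.of_forall fun x hx t ht => ?_
    refine hC (x, t) ⟨Set.uIoc_subset_uIcc hx, ?_⟩
    rw [Metric.mem_ball, Real.dist_eq] at ht
    have := abs_le.1 ht.le
    constructor <;> linarith [this.1, this.2]
  · exact intervalIntegrable_const
  · exact Filter.Eventually.of_forall fun x _ t _ => hasDerivAt_slice2 hgd x t

lemma parts2_s11 {a b : ℝ} (u u' u'' v v' v'' : ℝ → ℝ)
    (hu : ∀ x, HasDerivAt u (u' x) x) (hu' : ∀ x, HasDerivAt u' (u'' x) x)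
    (hv : ∀ x, HasDerivAt v (v' x) x) (hv' : ∀ x, HasDerivAt v' (v'' x) x)
    (hcu'' : Continuous u'') (hcv'' : Continuous v'')
    (hpu : u b = u a) (hpu' : u' b = u' a) (hpv : v b = v a) (hpv' : v' b = v' a) :
    ∫ x in a..b, v x * u'' x = ∫ x in a..b, v'' x * u x := by
  have hcu : Continuous u := continuous_iff_continuousAt.2 fun x => (hu x).continuousAt
  have hcu' : Continuous u' := continuous_iff_continuousAt.2 fun x => (hu' x).continuousAt
  have hcv : Continuous v := continuous_iff_continuousAt.2 fun x => (hv x).continuousAt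
  have hcv' : Continuous v' := continuous_iff_continuousAt.2 fun x => (hv' x).continuousAt
  have h1 : ∫ x in a..b, v x * u'' x
      = v b * u' b - v a * u' a - ∫ x in a..b, v' x * u' x :=
    intervalIntegral.integral_mul_deriv_eq_deriv_mul (fun x _ => hv x) (fun x _ => hu' x)
      (hcv'.intervalIntegrable a b) (hcu''.intervalIntegrable a b)
  have h2 : ∫ x in a..b, v' x * u' x
      = v' b * u b - v' a * u a - ∫ x in a..b, v'' x * u x :=
    intervalIntegral.integral_mul_deriv_eq_deriv_mul (fun x _ => hv' x) (fun x _ => hu x)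
      (hcv''.intervalIntegrable a b) (hcu'.intervalIntegrable a b)
  rw [h1, h2, hpu, hpu', hpv, hpv']
  ring
theorem entropy_convexity (ω : ℕ) (hω : 0 < ω) (T : ℝ) (hT : 0 < T)
    (k F : ℝ → ℝ → ℝ)
    (hs : ContDiff ℝ (⊤ : ℕ∞) (Function.uncurry k))
    (hper : ∀ t θ, k (θ + 2*ω*π) t = k θ t)
    (hkpos : ∀ θ, ∀ t ∈ Set.Ico (0:ℝ) T, 0 < k θ t)
    (hF : ∀ θ t, F θ t = deriv (deriv (fun x => k x t)) θ + k θ t)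
    (hev : ∀ θ, ∀ t ∈ Set.Ico (0:ℝ) T,
      deriv (fun s => k θ s) t
        = -(k θ t)^2 * (deriv (deriv (fun x => F x t)) θ + F θ t)) :
    (∀ t ∈ Set.Ico (0:ℝ) T,
      deriv (fun s => ∫ θ in (0:ℝ)..(2*ω*π), (F θ s)^2) t
        = -2 * (∫ θ in (0:ℝ)..(2*ω*π),
            (k θ t * (deriv (deriv (fun x => F x t)) θ + F θ t))^2)
      ∧ deriv (fun s => ∫ θ in (0:ℝ)..(2*ω*π), (F θ s)^2) t ≤ 0) ∧
    ConvexOn ℝ (Set.Ico 0 T)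
      (fun t => ∫ θ in (0:ℝ)..(2*ω*π), Real.log (k θ t)) := by
  have hπ := Real.pi_pos
  have hω' : (0:ℝ) < ω := by exact_mod_cast hω
  set L : ℝ := 2*ω*π with hLdef
  have hL0 : 0 < L := by positivity
  set K : ℝ × ℝ → ℝ := Function.uncurry k with hKdef
  have hKs : ContDiff ℝ (⊤ : ℕ∞) K := hs
  have hKd : Differentiable ℝ K := hKs.differentiable (by simp)
  have hK1s : ContDiff ℝ (⊤ : ℕ∞) (pd1 K) := pd1_smooth_s11 hKs
  have hK2s : ContDiff ℝ (⊤ : ℕ∞) (pd1 (pd1 K)) := pd1_smooth_s11 hK1s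
  have hKts : ContDiff ℝ (⊤ : ℕ∞) (pd2 K) := pd2_smooth hKs
  have hKt1s : ContDiff ℝ (⊤ : ℕ∞) (pd1 (pd2 K)) := pd1_smooth_s11 hKts
  have hKt2s : ContDiff ℝ (⊤ : ℕ∞) (pd1 (pd1 (pd2 K))) := pd1_smooth_s11 hKt1s
  set FF : ℝ × ℝ → ℝ := fun p => pd1 (pd1 K) p + K p with hFFdef
  have hFFs : ContDiff ℝ (⊤ : ℕ∞) FF := hK2s.add hKs
  have hFFd : Differentiable ℝ FF := hFFs.differentiable (by simp)
  have hFF1s : ContDiff ℝ (⊤ : ℕ∞) (pd1 FF) := pd1_smooth_s11 hFFs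
  have hFF2s : ContDiff ℝ (⊤ : ℕ∞) (pd1 (pd1 FF)) := pd1_smooth_s11 hFF1s
  set G : ℝ × ℝ → ℝ := fun p => K p * (pd1 (pd1 FF) p + FF p) with hGdef
  have hGs : ContDiff ℝ (⊤ : ℕ∞) G := hKs.mul (hFF2s.add hFFs)
  -- basic identifications
  have hkK : ∀ θ t, k θ t = K (θ, t) := fun _ _ => rfl
  have hFeq : ∀ θ t, F θ t = FF (θ, t) := by
    intro θ t
    have h1 : deriv (fun x => k x t) = fun x => pd1 K (x, t) := deriv_slice1 hKd t
    have h2 : deriv (fun x => pd1 K (x, t)) θ = pd1 (pd1 K) (θ, t) :=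
      (hasDerivAt_slice1 (hK1s.differentiable (by simp)) t θ).deriv
    rw [hF, h1, h2]; rfl
  have hFfun : ∀ t, (fun x => F x t) = fun x => FF (x, t) :=
    fun t => funext fun x => hFeq x t
  have hFslice2 : ∀ θ t, deriv (deriv (fun x => F x t)) θ = pd1 (pd1 FF) (θ, t) := by
    intro θ t
    rw [hFfun t, deriv_slice1 hFFd t]
    exact (hasDerivAt_slice1 (hFF1s.differentiable (by simp)) t θ).deriv
  have hev' : ∀ θ, ∀ t ∈ Set.Ico (0:ℝ) T, pd2 K (θ, t) = -(K (θ, t)) * G (θ, t) := by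
    intro θ t ht
    have h1 : deriv (fun s => k θ s) t = pd2 K (θ, t) :=
      (hasDerivAt_slice2 hKd θ t).deriv
    have h := hev θ t ht
    rw [h1, hFslice2 θ t, hFeq θ t, hkK θ t] at h
    rw [h, hGdef]
    ring
  -- periodicity
  have hKper : ∀ p : ℝ × ℝ, K (p + (L, 0)) = K p := by
    intro p
    show k (p.1 + L) (p.2 + 0) = k p.1 p.2
    rw [add_zero, hLdef]; exact hper p.2 p.1
  have hK1per : ∀ p, pd1 K (p + (L, 0)) = pd1 K p := pd1_periodic hKd hKper
  have hK2per : ∀ p, pd1 (pd1 K) (p + (L, 0)) = pd1 (pd1 K) p :=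
    pd1_periodic (hK1s.differentiable (by simp)) hK1per
  have hKtper : ∀ p, pd2 K (p + (L, 0)) = pd2 K p := pd2_periodic hKd hKper
  have hKt1per : ∀ p, pd1 (pd2 K) (p + (L, 0)) = pd1 (pd2 K) p :=
    pd1_periodic (hKts.differentiable (by simp)) hKtper
  have hFFper : ∀ p, FF (p + (L, 0)) = FF p := by
    intro p; simp only [hFFdef]; rw [hK2per, hKper]
  have hFF1per : ∀ p, pd1 FF (p + (L, 0)) = pd1 FF p := pd1_periodic hFFd hFFper
  have endpt : ∀ (f : ℝ × ℝ → ℝ), (∀ p, f (p + (L, 0)) = f p) → ∀ t, f (L, t) = f (0, t) := by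
    intro f hf t
    have := hf (0, t)
    simpa using this
  -- mixed partials
  have hpd2FF : ∀ p, pd2 FF p = pd1 (pd1 (pd2 K)) p + pd2 K p := by
    intro p
    have h1 : pd2 FF p = pd2 (pd1 (pd1 K)) p + pd2 K p :=
      pd2_add (hK2s.differentiable (by simp)) hKd p
    have h2 : pd2 (pd1 (pd1 K)) = pd1 (pd1 (pd2 K)) :=
      (pd_swap hK1s).symm.trans (congrArg pd1 (pd_swap hKs).symm)
    rw [h1, h2]
  -- derivative of the energy integral
  have hΦ : ∀ t₀ : ℝ, HasDerivAt (fun t => ∫ θ in (0:ℝ)..L, FF (θ, t) ^ 2)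
      (∫ θ in (0:ℝ)..L, 2 * FF (θ, t₀) * (pd1 (pd1 (pd2 K)) (θ, t₀) + pd2 K (θ, t₀))) t₀ := by
    intro t₀
    have h := hasDerivAt_intervalIntegral_param (hFFs.pow 2) 0 L t₀
    have heq : (∫ θ in (0:ℝ)..L, pd2 (fun p => FF p ^ 2) (θ, t₀))
        = ∫ θ in (0:ℝ)..L, 2 * FF (θ, t₀) * (pd1 (pd1 (pd2 K)) (θ, t₀) + pd2 K (θ, t₀)) := by
      refine intervalIntegral.integral_congr fun θ _ => ?_
      rw [pd2_sq hFFd, hpd2FF]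
    rw [← heq]
    exact h
  have hGint : ∀ t : ℝ, 0 ≤ ∫ θ in (0:ℝ)..L, G (θ, t) ^ 2 :=
    fun t => intervalIntegral.integral_nonneg hL0.le fun x _ => sq_nonneg _
  have key : ∀ t ∈ Set.Ico (0:ℝ) T,
      (∫ θ in (0:ℝ)..L, 2 * FF (θ, t) * (pd1 (pd1 (pd2 K)) (θ, t) + pd2 K (θ, t)))
        = -2 * ∫ θ in (0:ℝ)..L, G (θ, t) ^ 2 := by
    intro t ht
    have hu : ∀ x, HasDerivAt (fun x => pd2 K (x, t)) (pd1 (pd2 K) (x, t)) x :=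
      fun x => hasDerivAt_slice1 (hKts.differentiable (by simp)) t x
    have hu' : ∀ x, HasDerivAt (fun x => pd1 (pd2 K) (x, t)) (pd1 (pd1 (pd2 K)) (x, t)) x :=
      fun x => hasDerivAt_slice1 (hKt1s.differentiable (by simp)) t x
    have hv : ∀ x, HasDerivAt (fun x => FF (x, t)) (pd1 FF (x, t)) x :=
      fun x => hasDerivAt_slice1 hFFd t x
    have hv' : ∀ x, HasDerivAt (fun x => pd1 FF (x, t)) (pd1 (pd1 FF) (x, t)) x :=
      fun x => hasDerivAt_slice1 (hFF1s.differentiable (by simp)) t x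
    have hparts : ∫ x in (0:ℝ)..L, FF (x, t) * pd1 (pd1 (pd2 K)) (x, t)
        = ∫ x in (0:ℝ)..L, pd1 (pd1 FF) (x, t) * pd2 K (x, t) :=
      parts2_s11 _ _ _ _ _ _ hu hu' hv hv'
        (slice1_cont hKt2s.continuous t) (slice1_cont hFF2s.continuous t)
        (endpt _ hKtper t) (endpt _ hKt1per t) (endpt _ hFFper t) (endpt _ hFF1per t)
    have i1 : IntervalIntegrable (fun θ => FF (θ, t) * pd1 (pd1 (pd2 K)) (θ, t))
        MeasureTheory.volume 0 L :=
      ((slice1_cont hFFs.continuous t).mul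
        (slice1_cont hKt2s.continuous t)).intervalIntegrable 0 L
    have i2 : IntervalIntegrable (fun θ => FF (θ, t) * pd2 K (θ, t))
        MeasureTheory.volume 0 L :=
      ((slice1_cont hFFs.continuous t).mul
        (slice1_cont hKts.continuous t)).intervalIntegrable 0 L
    have i3 : IntervalIntegrable (fun θ => pd1 (pd1 FF) (θ, t) * pd2 K (θ, t))
        MeasureTheory.volume 0 L :=
      ((slice1_cont hFF2s.continuous t).mul
        (slice1_cont hKts.continuous t)).intervalIntegrable 0 L
    calc ∫ θ in (0:ℝ)..L, 2 * FF (θ, t) * (pd1 (pd1 (pd2 K)) (θ, t) + pd2 K (θ, t))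
        = ∫ θ in (0:ℝ)..L, (2 : ℝ) * (FF (θ, t) * pd1 (pd1 (pd2 K)) (θ, t)
            + FF (θ, t) * pd2 K (θ, t)) :=
          intervalIntegral.integral_congr fun θ _ => by ring
      _ = 2 * ((∫ θ in (0:ℝ)..L, FF (θ, t) * pd1 (pd1 (pd2 K)) (θ, t))
            + ∫ θ in (0:ℝ)..L, FF (θ, t) * pd2 K (θ, t)) := by
          rw [intervalIntegral.integral_const_mul, intervalIntegral.integral_add i1 i2]
      _ = 2 * ((∫ θ in (0:ℝ)..L, pd1 (pd1 FF) (θ, t) * pd2 K (θ, t))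
            + ∫ θ in (0:ℝ)..L, FF (θ, t) * pd2 K (θ, t)) := by rw [hparts]
      _ = 2 * ∫ θ in (0:ℝ)..L, (pd1 (pd1 FF) (θ, t) * pd2 K (θ, t)
            + FF (θ, t) * pd2 K (θ, t)) := by rw [intervalIntegral.integral_add i3 i2]
      _ = 2 * ∫ θ in (0:ℝ)..L, -(G (θ, t) ^ 2) := by
          refine congrArg _ (intervalIntegral.integral_congr fun θ _ => ?_)
          rw [hev' θ t ht]
          simp only [hGdef]
          ring
      _ = -2 * ∫ θ in (0:ℝ)..L, G (θ, t) ^ 2 := by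
          rw [intervalIntegral.integral_neg]; ring
  have hΦfun : (fun s => ∫ θ in (0:ℝ)..L, (F θ s)^2)
      = fun s => ∫ θ in (0:ℝ)..L, FF (θ, s) ^ 2 :=
    funext fun s => intervalIntegral.integral_congr fun θ _ => by rw [hFeq]
  constructor
  · intro t ht
    have hd : deriv (fun s => ∫ θ in (0:ℝ)..L, (F θ s)^2) t
        = -2 * ∫ θ in (0:ℝ)..L, G (θ, t) ^ 2 := by
      rw [hΦfun, (hΦ t).deriv, key t ht]
    have hrhs : (∫ θ in (0:ℝ)..L, (k θ t * (deriv (deriv (fun x => F x t)) θ + F θ t))^2)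
        = ∫ θ in (0:ℝ)..L, G (θ, t) ^ 2 := by
      refine intervalIntegral.integral_congr fun θ _ => ?_
      rw [hFslice2 θ t, hFeq θ t, hkK θ t, hGdef]
    refine ⟨by rw [hd, hrhs], ?_⟩
    rw [hd]
    linarith [hGint t]
  · -- convexity of the entropy
    have hE' : ∀ t ∈ Set.Ioo (0:ℝ) T,
        HasDerivAt (fun s => ∫ θ in (0:ℝ)..L, Real.log (k θ s))
          (-(∫ θ in (0:ℝ)..L, FF (θ, t) ^ 2)) t := by
      intro t ht
      have htIco := Set.Ioo_subset_Ico_self ht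
      set ε := min t (T - t) with hεdef
      have hε : 0 < ε := lt_min ht.1 (sub_pos.2 ht.2)
      have hIcc : ∀ s ∈ Set.Icc (t - ε/2) (t + ε/2), s ∈ Set.Ico (0:ℝ) T := by
        intro s hs
        have h1 : ε ≤ t := min_le_left _ _
        have h2 : ε ≤ T - t := min_le_right _ _
        exact ⟨by linarith [hs.1], by linarith [hs.2]⟩
      have hball : ∀ s ∈ Metric.ball t (ε/2), s ∈ Set.Ico (0:ℝ) T := by
        intro s hs
        rw [Metric.mem_ball, Real.dist_eq] at hs
        have := abs_le.1 hs.le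
        exact hIcc s ⟨by linarith [this.1], by linarith [this.2]⟩
      obtain ⟨C, hC⟩ : ∃ C, ∀ p ∈ Set.uIcc (0:ℝ) L ×ˢ Set.Icc (t - ε/2) (t + ε/2),
          ‖pd2 K p / K p‖ ≤ C := by
        apply (isCompact_uIcc.prod isCompact_Icc).exists_bound_of_continuousOn
        refine hKts.continuous.continuousOn.div hKd.continuous.continuousOn ?_
        intro p hp
        exact ne_of_gt (hkpos p.1 p.2 (hIcc p.2 hp.2))
      have c1 : ∀ᶠ s in nhds t, MeasureTheory.AEStronglyMeasurable
          (fun θ => Real.log (k θ s))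
          (MeasureTheory.volume.restrict (Set.uIoc (0:ℝ) L)) :=
        Filter.Eventually.of_forall fun s =>
          (Real.measurable_log.comp
            (slice1_cont hKd.continuous s).measurable).aestronglyMeasurable
      have c2 : IntervalIntegrable (fun θ => Real.log (k θ t))
          MeasureTheory.volume 0 L := by
        apply Continuous.intervalIntegrable
        rw [continuous_iff_continuousAt]
        intro θ
        exact ContinuousAt.comp (g := Real.log) (f := fun x => K (x, t))
          (Real.continuousAt_log (ne_of_gt (hkpos θ t htIco)))
          (slice1_cont hKd.continuous t).continuousAt
      have c3 : MeasureTheory.AEStronglyMeasurable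
          (fun θ => pd2 K (θ, t) / K (θ, t))
          (MeasureTheory.volume.restrict (Set.uIoc (0:ℝ) L)) :=
        (((slice1_cont hKts.continuous t)).div (slice1_cont hKd.continuous t)
          fun θ => ne_of_gt (hkpos θ t htIco)).aestronglyMeasurable
      have c4 : ∀ᵐ θ ∂MeasureTheory.volume, θ ∈ Set.uIoc (0:ℝ) L →
          ∀ s ∈ Metric.ball t (ε/2), ‖pd2 K (θ, s) / K (θ, s)‖ ≤ C := by
        refine MeasureTheory.ae_of_all _ fun θ hθ s hs => ?_
        refine hC (θ, s) ⟨Set.uIoc_subset_uIcc hθ, ?_⟩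
        rw [Metric.mem_ball, Real.dist_eq] at hs
        have := abs_le.1 hs.le
        exact ⟨by linarith [this.1], by linarith [this.2]⟩
      have c6 : ∀ᵐ θ ∂MeasureTheory.volume, θ ∈ Set.uIoc (0:ℝ) L →
          ∀ s ∈ Metric.ball t (ε/2),
            HasDerivAt (fun s' => Real.log (k θ s')) (pd2 K (θ, s) / K (θ, s)) s := by
        refine MeasureTheory.ae_of_all _ fun θ _ s hs => ?_
        exact (hasDerivAt_slice2 hKd θ s).log (ne_of_gt (hkpos θ s (hball s hs)))
      have main := (intervalIntegral.hasDerivAt_integral_of_dominated_loc_of_deriv_le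
        (F := fun s θ => Real.log (k θ s)) (F' := fun s θ => pd2 K (θ, s) / K (θ, s))
        (bound := fun _ => C) (Metric.ball_mem_nhds t (half_pos hε)) c1 c2 c3 c4 intervalIntegrable_const c6).2
      have e1 : (∫ θ in (0:ℝ)..L, pd2 K (θ, t) / K (θ, t))
          = ∫ θ in (0:ℝ)..L, -(G (θ, t)) := by
        refine intervalIntegral.integral_congr fun θ _ => ?_
        rw [hev' θ t htIco]
        have hne : K (θ, t) ≠ 0 := ne_of_gt (hkpos θ t htIco)
        field_simp
      have hparts : ∫ x in (0:ℝ)..L, K (x, t) * pd1 (pd1 FF) (x, t)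
          = ∫ x in (0:ℝ)..L, pd1 (pd1 K) (x, t) * FF (x, t) :=
        parts2_s11 _ _ _ _ _ _ (fun x => hasDerivAt_slice1 hFFd t x)
          (fun x => hasDerivAt_slice1 (hFF1s.differentiable (by simp)) t x)
          (fun x => hasDerivAt_slice1 hKd t x)
          (fun x => hasDerivAt_slice1 (hK1s.differentiable (by simp)) t x)
          (slice1_cont hFF2s.continuous t) (slice1_cont hK2s.continuous t)
          (endpt _ hFFper t) (endpt _ hFF1per t) (endpt _ hKper t) (endpt _ hK1per t)
      have i4 : IntervalIntegrable (fun θ => K (θ, t) * pd1 (pd1 FF) (θ, t))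
          MeasureTheory.volume 0 L :=
        ((slice1_cont hKd.continuous t).mul
          (slice1_cont hFF2s.continuous t)).intervalIntegrable 0 L
      have i5 : IntervalIntegrable (fun θ => K (θ, t) * FF (θ, t))
          MeasureTheory.volume 0 L :=
        ((slice1_cont hKd.continuous t).mul
          (slice1_cont hFFs.continuous t)).intervalIntegrable 0 L
      have i6 : IntervalIntegrable (fun θ => pd1 (pd1 K) (θ, t) * FF (θ, t))
          MeasureTheory.volume 0 L :=
        ((slice1_cont hK2s.continuous t).mul
          (slice1_cont hFFs.continuous t)).intervalIntegrable 0 L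
      have e2 : (∫ θ in (0:ℝ)..L, G (θ, t)) = ∫ θ in (0:ℝ)..L, FF (θ, t) ^ 2 := by
        calc (∫ θ in (0:ℝ)..L, G (θ, t))
            = ∫ θ in (0:ℝ)..L, (K (θ, t) * pd1 (pd1 FF) (θ, t) + K (θ, t) * FF (θ, t)) :=
              intervalIntegral.integral_congr fun θ _ => by simp only [hGdef]; ring
          _ = (∫ θ in (0:ℝ)..L, K (θ, t) * pd1 (pd1 FF) (θ, t))
              + ∫ θ in (0:ℝ)..L, K (θ, t) * FF (θ, t) := intervalIntegral.integral_add i4 i5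
          _ = (∫ θ in (0:ℝ)..L, pd1 (pd1 K) (θ, t) * FF (θ, t))
              + ∫ θ in (0:ℝ)..L, K (θ, t) * FF (θ, t) := by rw [hparts]
          _ = ∫ θ in (0:ℝ)..L, (pd1 (pd1 K) (θ, t) * FF (θ, t) + K (θ, t) * FF (θ, t)) :=
              (intervalIntegral.integral_add i6 i5).symm
          _ = ∫ θ in (0:ℝ)..L, FF (θ, t) ^ 2 :=
              intervalIntegral.integral_congr fun θ _ => by simp only [hFFdef]; ring
      rw [e1, intervalIntegral.integral_neg, e2] at main
      exact main
    have hcontΦ : ContinuousOn (fun t => ∫ θ in (0:ℝ)..L, FF (θ, t) ^ 2) (Set.Ico 0 T) :=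
      fun t _ => (hΦ t).continuousAt.continuousWithinAt
    have hanti : AntitoneOn (fun t => ∫ θ in (0:ℝ)..L, FF (θ, t) ^ 2) (Set.Ico 0 T) := by
      apply antitoneOn_of_deriv_nonpos (convex_Ico 0 T) hcontΦ
      · intro x hx
        exact (hΦ x).differentiableAt.differentiableWithinAt
      · intro x hx
        rw [interior_Ico] at hx
        rw [(hΦ x).deriv, key x (Set.Ioo_subset_Ico_self hx)]
        linarith [hGint x]
    apply MonotoneOn.convexOn_of_deriv (convex_Ico 0 T)
    · -- continuity of the entropy on [0, T)
      intro t₀ ht₀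
      have hmid : t₀ < (t₀ + T) / 2 := by linarith [ht₀.2]
      have hmidT : (t₀ + T) / 2 < T := by linarith [ht₀.2]
      have hIccsub : ∀ s ∈ Set.Icc (0:ℝ) ((t₀ + T) / 2), s ∈ Set.Ico (0:ℝ) T :=
        fun s hs => ⟨hs.1, lt_of_le_of_lt hs.2 hmidT⟩
      obtain ⟨C, hC⟩ : ∃ C, ∀ p ∈ Set.uIcc (0:ℝ) L ×ˢ Set.Icc (0:ℝ) ((t₀ + T) / 2),
          ‖Real.log (K p)‖ ≤ C := by
        apply (isCompact_uIcc.prod isCompact_Icc).exists_bound_of_continuousOn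
        intro p hp
        exact (ContinuousAt.comp (g := Real.log) (f := K)
          (Real.continuousAt_log (ne_of_gt (hkpos p.1 p.2 (hIccsub p.2 hp.2))))
          hKd.continuous.continuousAt).continuousWithinAt
      apply intervalIntegral.continuousWithinAt_of_dominated_interval (bound := fun _ => C)
      · exact Filter.Eventually.of_forall fun s =>
          (Real.measurable_log.comp
            (slice1_cont hKd.continuous s).measurable).aestronglyMeasurable
      · have h1 : ∀ᶠ x in nhdsWithin t₀ (Set.Ico 0 T), x < (t₀ + T) / 2 :=
          (eventually_lt_nhds hmid).filter_mono nhdsWithin_le_nhds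
        filter_upwards [h1, eventually_mem_nhdsWithin] with x hx1 hx2
        refine MeasureTheory.ae_of_all _ fun θ hθ => ?_
        exact hC (θ, x) ⟨Set.uIoc_subset_uIcc hθ, ⟨hx2.1, hx1.le⟩⟩
      · exact intervalIntegrable_const
      · refine MeasureTheory.ae_of_all _ fun θ _ => ?_
        exact (ContinuousAt.comp (g := Real.log) (f := fun s => K (θ, s))
          (Real.continuousAt_log (ne_of_gt (hkpos θ t₀ ht₀)))
          (slice2_cont hKd.continuous θ).continuousAt).continuousWithinAt
    · rw [interior_Ico]
      exact fun x hx => (hE' x hx).differentiableAt.differentiableWithinAt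
    · rw [interior_Ico]
      intro x hx y hy hxy
      rw [(hE' x hx).deriv, (hE' y hy).deriv]
      exact neg_le_neg (hanti (Set.Ioo_subset_Ico_self hx) (Set.Ioo_subset_Ico_self hy) hxy)
end
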